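/- Let L be a finitary first-order language that is purely monadic (its only symbols are unary relation symbols; it has no function symbols and no constant symbols). Then for every L-sentence φ (equality allowed), there is an L-sentence χ expressing θ(φ): for every nonempty L-structure A, A ⊨ χ iff some nonempty substructure of A satisfies φ. In other words, L_{ω,ω} over a purely monadic signature is closed under θ. -/

import Mathlib

/-!
Colour each element of a structure by the set of unary relations of `φ` it satisfies, and let
`N` be one more than the quantifier depth of `φ`. A back-and-forth argument shows that whether a
monadic structure satisfies `φ` depends only on its colour profile: the number of elements of each
colour, truncated at `N`. If `M` has, for every colour `c`, at least `J c` elements of colour `c`,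
where `J` is the profile of some nonempty model of `φ`, then those witnesses form a substructure
with profile exactly `J`, hence a model of `φ`; conversely a substructure of `M` modelling `φ` has
a profile that `M` dominates. So `χ` is the finite disjunction, over the profiles of nonempty
models of `φ`, of the sentences saying that `M` dominates the profile.
-/

open FirstOrder Language Structure

universe u v

theorem Finset.card_image_le_card_image_of_eq_imp {ι α β : Type*} [DecidableEq α] [DecidableEq β]
    {s : Finset ι} {f : ι → α} {g : ι → β} (h : ∀ i ∈ s, ∀ j ∈ s, f i = f j → g i = g j) :
    (s.image g).card ≤ (s.image f).card := by
  set F := s.image fun i => (f i, g i)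
  have hfst : Set.InjOn Prod.fst (F : Set (α × β)) := by
    simp only [F, coe_image]
    rintro _ ⟨i, hi, rfl⟩ _ ⟨j, hj, rfl⟩ hij
    simp only at hij
    simp only [hij, h i hi j hj hij]
  calc (s.image g).card = (F.image Prod.snd).card := by
        simp [F, Finset.image_image, Function.comp_def]
    _ ≤ F.card := Finset.card_image_le
    _ = (F.image Prod.fst).card := (Finset.card_image_of_injOn hfst).symm
    _ = (s.image f).card := by simp [F, Finset.image_image, Function.comp_def]

namespace FirstOrder.Language

variable {L : Language.{u, v}}

theorem Term.exists_eq_var [L.IsRelational] {α : Type*} (t : L.Term α) : ∃ x, t = var x := by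
  cases t with
  | var x => exact ⟨x, rfl⟩
  | func f _ => exact isEmptyElim f

namespace BoundedFormula

variable {α : Type*}

def quantifierDepth : ∀ {n}, L.BoundedFormula α n → ℕ
  | _, falsum => 0
  | _, equal _ _ => 0
  | _, rel _ _ => 0
  | _, imp φ ψ => max φ.quantifierDepth ψ.quantifierDepth
  | _, all φ => φ.quantifierDepth + 1

def relationSymbols : ∀ {n}, L.BoundedFormula α n → Set (Σ l, L.Relations l)
  | _, falsum => ∅
  | _, equal _ _ => ∅
  | _, rel R _ => {⟨_, R⟩}
  | _, imp φ ψ => φ.relationSymbols ∪ ψ.relationSymbols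
  | _, all φ => φ.relationSymbols

theorem finite_relationSymbols : ∀ {n} (φ : L.BoundedFormula α n), φ.relationSymbols.Finite
  | _, falsum => Set.finite_empty
  | _, equal _ _ => Set.finite_empty
  | _, rel _ _ => Set.finite_singleton _
  | _, imp φ ψ => φ.finite_relationSymbols.union ψ.finite_relationSymbols
  | _, all φ => φ.finite_relationSymbols

end BoundedFormula

variable (P : Set (L.Relations 1)) {N : ℕ} {M M' : Type*} [L.Structure M] [L.Structure M']

def color (a : M) : P → Prop := fun R => RelMap (R : L.Relations 1) ![a]

variable (M) in
def HasAtLeast (c : P → Prop) (k : ℕ) : Prop :=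
  ∃ s : Finset M, s.card = k ∧ ∀ a ∈ s, color P a = c

variable {P} {c : P → Prop} {j k : ℕ}

theorem hasAtLeast_iff_exists_injective :
    HasAtLeast P M c k ↔ ∃ xs : Fin k → M, Function.Injective xs ∧ ∀ i, color P (xs i) = c := by
  classical
  constructor
  · rintro ⟨s, hs, hc⟩
    let e : s ≃ Fin k := Fintype.equivFinOfCardEq (by simpa using hs)
    exact ⟨fun i => e.symm i, Subtype.val_injective.comp e.symm.injective,
      fun i => hc _ (e.symm i).2⟩
  · rintro ⟨xs, hxs, hc⟩
    refine ⟨Finset.univ.image xs, by simp [Finset.card_image_of_injective _ hxs], ?_⟩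
    simp only [Finset.mem_image, Finset.mem_univ, true_and, forall_exists_index]
    rintro _ i rfl
    exact hc i

theorem HasAtLeast.mono (h : HasAtLeast P M c k) (hjk : j ≤ k) : HasAtLeast P M c j := by
  obtain ⟨s, rfl, hc⟩ := h
  obtain ⟨t, hts, rfl⟩ := Finset.exists_subset_card_eq hjk
  exact ⟨t, rfl, fun a ha => hc a (hts ha)⟩

variable (P N M) in
open Classical in
noncomputable def colorProfile (c : P → Prop) : Fin (N + 1) :=
  ⟨Nat.findGreatest (HasAtLeast P M c) N, Nat.lt_succ_of_le (Nat.findGreatest_le N)⟩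

theorem hasAtLeast_colorProfile (c : P → Prop) :
    HasAtLeast P M c (colorProfile P N M c) := by
  classical
  exact Nat.findGreatest_spec (Nat.zero_le N) ⟨∅, rfl, by simp⟩

theorem hasAtLeast_iff_le_colorProfile (hk : k ≤ N) :
    HasAtLeast P M c k ↔ k ≤ colorProfile P N M c := by
  classical
  exact ⟨Nat.le_findGreatest hk, (hasAtLeast_colorProfile c).mono⟩

theorem colorProfile_eq_of_hasAtLeast_iff (h : ∀ k, HasAtLeast P M c k ↔ k ≤ j) (hj : j ≤ N) :
    (colorProfile P N M c : ℕ) = j :=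
  le_antisymm ((h _).1 (hasAtLeast_colorProfile c))
    ((hasAtLeast_iff_le_colorProfile hj).1 ((h j).2 le_rfl))

theorem HasAtLeast.of_colorProfile_eq (hM : HasAtLeast P M c k)
    (h : colorProfile P N M = colorProfile P N M') (hk : k ≤ N) : HasAtLeast P M' c k := by
  rw [hasAtLeast_iff_le_colorProfile hk] at hM ⊢
  rwa [← h]

theorem nonempty_iff_exists_pos_colorProfile (hN : 0 < N) :
    Nonempty M ↔ ∃ c, 0 < (colorProfile P N M c : ℕ) := by
  constructor
  · rintro ⟨a⟩
    exact ⟨color P a, (hasAtLeast_iff_le_colorProfile hN).1 ⟨{a}, rfl, by simp⟩⟩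
  · rintro ⟨c, hc⟩
    obtain ⟨s, hs, -⟩ := hasAtLeast_colorProfile (P := P) (N := N) (M := M) c
    obtain ⟨a, -⟩ := Finset.card_pos.1 (hs ▸ hc)
    exact ⟨a⟩

variable (P) in
def SameAtomicType {n : ℕ} (v : Fin n → M) (v' : Fin n → M') : Prop :=
  (∀ i, color P (v i) = color P (v' i)) ∧ ∀ i j, v i = v j ↔ v' i = v' j

namespace SameAtomicType

variable {n : ℕ} {v : Fin n → M} {v' : Fin n → M'}

theorem symm (h : SameAtomicType P v v') : SameAtomicType P v' v :=
  ⟨fun i => (h.1 i).symm, fun i j => (h.2 i j).symm⟩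

theorem snoc (h : SameAtomicType P v v') {a : M} {a' : M'} (hc : color P a = color P a')
    (ha : ∀ i, a = v i ↔ a' = v' i) :
    SameAtomicType P (Fin.snoc v a : Fin (n + 1) → M) (Fin.snoc v' a' : Fin (n + 1) → M') := by
  refine ⟨Fin.lastCases (by simpa) fun i => by simpa using h.1 i, fun i j => ?_⟩
  induction i using Fin.lastCases <;> induction j using Fin.lastCases <;>
    simp [ha, h.2, eq_comm]

/-- The colour class of `a` has more elements than those listed by `v`, and this number is at
most `N`, so it transfers to `M'`. -/
theorem exists_color_eq_forall_ne (h : SameAtomicType P v v')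
    (hN : colorProfile P N M = colorProfile P N M') (hn : n < N) {a : M} (ha : ∀ i, a ≠ v i) :
    ∃ a' : M', color P a' = color P a ∧ ∀ i, a' ≠ v' i := by
  classical
  set c := color P a
  set I := Finset.univ.filter fun i => color P (v i) = c
  have hvI : a ∉ I.image v := by simpa using fun i _ => (ha i).symm
  have hcard : (I.image v).card + 1 ≤ N :=
    calc (I.image v).card + 1 ≤ I.card + 1 := Nat.succ_le_succ Finset.card_image_le
      _ ≤ n + 1 := Nat.succ_le_succ (I.card_le_univ.trans_eq (Fintype.card_fin n))
      _ ≤ N := hn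
  have hM : HasAtLeast P M c ((I.image v).card + 1) :=
    ⟨insert a (I.image v), Finset.card_insert_of_notMem hvI, by simp [I, c]⟩
  obtain ⟨s', hs', hc'⟩ := hM.of_colorProfile_eq hN hcard
  have hlt : (I.image v').card < s'.card :=
    hs' ▸ Nat.lt_succ_of_le (Finset.card_image_le_card_image_of_eq_imp fun i _ j _ => (h.2 i j).1)
  obtain ⟨a', ha's', ha'I⟩ := Finset.exists_mem_notMem_of_card_lt_card hlt
  refine ⟨a', hc' a' ha's', fun i hi => ha'I ?_⟩
  subst hi
  simpa [I, h.1] using ⟨i, hc' _ ha's', rfl⟩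

theorem exists_snoc (h : SameAtomicType P v v') (hN : colorProfile P N M = colorProfile P N M')
    (hn : n < N) (a : M) :
    ∃ a' : M', SameAtomicType P (Fin.snoc v a : Fin (n + 1) → M) (Fin.snoc v' a') := by
  by_cases ha : ∃ i, a = v i
  · obtain ⟨i, rfl⟩ := ha
    exact ⟨v' i, h.snoc (h.1 i) fun j => h.2 i j⟩
  · simp only [not_exists] at ha
    obtain ⟨a', hc, ha'⟩ := h.exists_color_eq_forall_ne hN hn ha
    exact ⟨a', h.snoc hc.symm fun i => iff_of_false (ha i) (ha' i)⟩

end SameAtomicType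

theorem BoundedFormula.realize_iff_of_sameAtomicType [L.IsRelational]
    (hmon : ∀ n : ℕ, n ≠ 1 → IsEmpty (L.Relations n))
    (hN : colorProfile P N M = colorProfile P N M') {n : ℕ} (ψ : L.BoundedFormula Empty n)
    (hψ : ∀ R : L.Relations 1, ⟨1, R⟩ ∈ ψ.relationSymbols → R ∈ P)
    (hdepth : n + ψ.quantifierDepth ≤ N) {v : Fin n → M} {v' : Fin n → M'}
    (hv : SameAtomicType P v v') :
    ψ.Realize default v ↔ ψ.Realize default v' := by
  induction ψ with
  | falsum => exact Iff.rfl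
  | equal t₁ t₂ =>
    obtain ⟨x₁ | i, rfl⟩ := Term.exists_eq_var t₁
    · exact x₁.elim
    obtain ⟨x₂ | j, rfl⟩ := Term.exists_eq_var t₂
    · exact x₂.elim
    simpa [BoundedFormula.Realize] using hv.2 i j
  | @rel _ l R ts =>
    obtain rfl : l = 1 := by_contra fun hl => (hmon l hl).elim R
    obtain ⟨x | i, hx⟩ := Term.exists_eq_var (ts 0)
    · exact x.elim
    obtain rfl : ts = ![&i] := funext fun k => by rwa [Fin.fin_one_eq_zero k]
    have hR : R ∈ P := hψ R (by simp [relationSymbols])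
    change (R.boundedFormula₁ &i).Realize default v ↔ (R.boundedFormula₁ &i).Realize default v'
    simpa [color] using congrFun (hv.1 i) ⟨R, hR⟩
  | imp φ ψ ihφ ihψ =>
    simp only [quantifierDepth] at hdepth
    simp only [relationSymbols, Set.mem_union] at hψ
    simp only [realize_imp]
    rw [ihφ (fun R hR => hψ R (.inl hR)) (by omega) hv,
      ihψ (fun R hR => hψ R (.inr hR)) (by omega) hv]
  | all φ ih =>
    simp only [quantifierDepth] at hdepth
    have ih' := fun {w : Fin _ → M} {w' : Fin _ → M'} => ih hψ (by omega) (v := w) (v' := w')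
    simp only [realize_all]
    constructor
    · intro h a'
      obtain ⟨a, ha⟩ := hv.symm.exists_snoc hN.symm (by omega) a'
      exact (ih' ha.symm).1 (h a)
    · intro h a
      obtain ⟨a', ha⟩ := hv.exists_snoc hN (by omega) a
      exact (ih' ha).2 (h a')

theorem Sentence.realize_iff_of_colorProfile_eq [L.IsRelational]
    (hmon : ∀ n : ℕ, n ≠ 1 → IsEmpty (L.Relations n)) {φ : L.Sentence}
    (hφ : ∀ R : L.Relations 1, ⟨1, R⟩ ∈ φ.relationSymbols → R ∈ P)
    (hdepth : φ.quantifierDepth ≤ N) (hN : colorProfile P N M = colorProfile P N M') :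
    M ⊨ φ ↔ M' ⊨ φ :=
  BoundedFormula.realize_iff_of_sameAtomicType hmon hN φ hφ (by simpa)
    ⟨fun i => i.elim0, fun i => i.elim0⟩

section CountingSentences

variable [Finite P]

variable (P) in
noncomputable def colorFormula (c : P → Prop) {k : ℕ} (i : Fin k) : L.BoundedFormula Empty k :=
  (BoundedFormula.iInf fun R : {R : P // c R} => (R.1 : L.Relations 1).boundedFormula₁ &i) ⊓
    BoundedFormula.iInf fun R : {R : P // ¬c R} => ∼((R.1 : L.Relations 1).boundedFormula₁ &i)

theorem realize_colorFormula {k : ℕ} (i : Fin k) (xs : Fin k → M) :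
    (colorFormula P c i).Realize default xs ↔ color P (xs i) = c := by
  simp only [colorFormula, BoundedFormula.realize_inf, BoundedFormula.realize_iInf,
    BoundedFormula.realize_not, BoundedFormula.realize_rel₁, funext_iff, eq_iff_iff, color]
  exact ⟨fun h R => ⟨fun hR => by_contra fun hc => h.2 ⟨R, hc⟩ hR, fun hc => h.1 ⟨R, hc⟩⟩,
    fun h => ⟨fun R => (h R).2 R.2, fun R => mt (h R).1 R.2⟩⟩

variable (P) in
noncomputable def atLeastSentence (c : P → Prop) (k : ℕ) : L.Sentence :=
  ((BoundedFormula.iInf fun i : Fin k => colorFormula P c i) ⊓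
    BoundedFormula.iInf fun ij : {ij : Fin k × Fin k // ij.1 ≠ ij.2} =>
      ∼((&ij.1.1).bdEqual &ij.1.2)).exs

theorem realize_atLeastSentence : M ⊨ atLeastSentence P c k ↔ HasAtLeast P M c k := by
  simp only [hasAtLeast_iff_exists_injective, Sentence.Realize, atLeastSentence,
    BoundedFormula.realize_exs, BoundedFormula.realize_inf, BoundedFormula.realize_iInf,
    realize_colorFormula, BoundedFormula.realize_not, BoundedFormula.realize_bdEqual,
    Function.comp_apply, Term.realize_var, Sum.elim_inr, Subtype.forall, Prod.forall,
    Function.injective_iff_pairwise_ne, Pairwise, Function.onFun, and_comm, ne_eq]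

variable (P) in
noncomputable def profileSentence (J : (P → Prop) → ℕ) : L.Sentence :=
  BoundedFormula.iInf fun c => atLeastSentence P c (J c)

theorem realize_profileSentence {J : (P → Prop) → ℕ} :
    M ⊨ profileSentence P J ↔ ∀ c, HasAtLeast P M c (J c) := by
  simp only [Sentence.Realize, Formula.Realize, profileSentence, BoundedFormula.realize_iInf]
  exact forall_congr' fun c => realize_atLeastSentence

end CountingSentences

section Substructures

theorem color_coe_substructure (S : L.Substructure M) (x : S) : color P (x : M) = color P x := by
  funext R
  change RelMap _ _ = RelMap _ _
  congr 1
  ext i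
  fin_cases i
  rfl

theorem hasAtLeast_substructure_iff (S : L.Substructure M) :
    HasAtLeast P S c k ↔
      ∃ s : Finset M, ↑s ⊆ (S : Set M) ∧ s.card = k ∧ ∀ a ∈ s, color P a = c := by
  classical
  constructor
  · rintro ⟨s, rfl, hc⟩
    refine ⟨s.map (Function.Embedding.subtype _), ?_, Finset.card_map _, ?_⟩
    · simp only [Finset.coe_map, Function.Embedding.subtype_apply, Set.image_subset_iff]
      exact fun x _ => x.2
    · simpa only [Finset.forall_mem_map, Function.Embedding.subtype_apply,
        color_coe_substructure] using hc
  · rintro ⟨s, hsS, rfl, hc⟩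
    have hmem : ∀ a ∈ s, a ∈ S := fun a ha => hsS ha
    refine ⟨s.subtype (· ∈ S), ?_, fun x hx => ?_⟩
    · rw [← Finset.card_map, Finset.subtype_map_of_mem hmem]
    · rw [← color_coe_substructure]
      exact hc x (Finset.mem_subtype.1 hx)

theorem HasAtLeast.of_substructure {S : L.Substructure M} (h : HasAtLeast P S c k) :
    HasAtLeast P M c k :=
  let ⟨s, _, hs, hc⟩ := (hasAtLeast_substructure_iff S).1 h
  ⟨s, hs, hc⟩

theorem exists_substructure_hasAtLeast_iff [L.IsRelational] {J : (P → Prop) → ℕ}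
    (hJ : ∀ c, HasAtLeast P M c (J c)) :
    ∃ S : L.Substructure M, ∀ c k, HasAtLeast P S c k ↔ k ≤ J c := by
  choose s hs hsc using hJ
  refine ⟨Substructure.closure L (⋃ c, (s c : Set M)), fun c k => ?_⟩
  rw [hasAtLeast_substructure_iff, Substructure.closure_eq_of_isRelational]
  constructor
  · rintro ⟨t, htS, rfl, htc⟩
    have hts : t ⊆ s c := fun a ha => by
      obtain ⟨c', hac'⟩ := Set.mem_iUnion.1 (htS ha)
      rwa [← htc a ha, hsc c' a hac']
    exact hs c ▸ Finset.card_le_card hts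
  · intro hk
    obtain ⟨t, hts, rfl⟩ := Finset.exists_subset_card_eq ((hs c).symm ▸ hk)
    exact ⟨t, fun a ha => Set.mem_iUnion.2 ⟨c, hts ha⟩, rfl, fun a ha => hsc c a (hts ha)⟩

theorem exists_substructure_colorProfile_eq [L.IsRelational] {J : (P → Prop) → Fin (N + 1)}
    (hJ : ∀ c, HasAtLeast P M c (J c)) : ∃ S : L.Substructure M, colorProfile P N S = J := by
  obtain ⟨S, hS⟩ := exists_substructure_hasAtLeast_iff hJ
  exact ⟨S, funext fun c => Fin.ext (colorProfile_eq_of_hasAtLeast_iff (hS c) (Fin.is_le _))⟩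

end Substructures

end FirstOrder.Language

theorem theta_expressible_of_purely_monadic
    {L : FirstOrder.Language.{u, v}} [L.IsRelational]
    (hmon : ∀ n : ℕ, n ≠ 1 → IsEmpty (L.Relations n))
    (φ : L.Sentence) :
    ∃ χ : L.Sentence,
      ∀ (M : Type (max u v)) [L.Structure M] [Nonempty M],
        M ⊨ χ ↔ ∃ S : L.Substructure M, Nonempty S ∧ S ⊨ φ := by
  let P : Set (L.Relations 1) := {R | ⟨1, R⟩ ∈ φ.relationSymbols}
  have : Finite P := (φ.finite_relationSymbols.preimage sigma_mk_injective.injOn).to_subtype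
  let N := φ.quantifierDepth + 1
  have hφ {W W' : Type (max u v)} [L.Structure W] [L.Structure W']
      (h : colorProfile P N W = colorProfile P N W') : W ⊨ φ ↔ W' ⊨ φ :=
    Sentence.realize_iff_of_colorProfile_eq hmon (fun _ hR => hR) (Nat.le_succ _) h
  let IsModelProfile (J : (P → Prop) → Fin (N + 1)) : Prop :=
    ∃ (W : Type (max u v)) (_ : L.Structure W), Nonempty W ∧ colorProfile P N W = J ∧ W ⊨ φ
  refine ⟨Formula.iSup fun J : {J // IsModelProfile J} => profileSentence P fun c => J.1 c,
    fun M _ _ => ?_⟩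
  rw [Sentence.Realize, Formula.realize_iSup]
  constructor
  · rintro ⟨⟨J, W, _, hW, rfl, hWφ⟩, hM⟩
    obtain ⟨S, hS⟩ := exists_substructure_colorProfile_eq (realize_profileSentence.1 hM)
    have hne {W : Type (max u v)} [L.Structure W] :=
      nonempty_iff_exists_pos_colorProfile (P := P) (M := W) (Nat.succ_pos φ.quantifierDepth)
    exact ⟨S, hne.2 (hS ▸ hne.1 hW), (hφ hS).2 hWφ⟩
  · rintro ⟨S, hS, hSφ⟩
    exact ⟨⟨colorProfile P N S, S, _, hS, rfl, hSφ⟩,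
      realize_profileSentence.2 fun c => (hasAtLeast_colorProfile c).of_substructure⟩
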